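/- arXiv:2112.02377 — 3 statements merged into one kernel-verified Lean document; each statement's English description precedes it below -/
import Mathlib

section
/- Let A be an invertible n×n complex matrix, let A = M − N be a splitting of A with M invertible, and set T = M⁻¹N and c = M⁻¹b for a right-hand side b ∈ ℂⁿ. Then the iteration x⁽ᵏ⁺¹⁾ = T x⁽ᵏ⁾ + c converges to the exact solution x* = A⁻¹b for every initial guess x⁽⁰⁾ ∈ ℂⁿ if and only if the spectral radius of T is strictly less than 1. -/
/-!
Since `A⁻¹ b` is a fixed point of the iteration, the error satisfies
`x k - A⁻¹ b = T ^ k (x 0 - A⁻¹ b)`, so convergence from every initial guess means `T ^ k v → 0`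
for every `v`. If `ρ(T) < r < 1`, Gelfand's formula gives `‖T ^ k‖ ≤ r ^ k` eventually.
Conversely, an eigenvector `v` for an eigenvalue `μ` satisfies `T ^ k v = μ ^ k v`, which tends
to `0` only if `‖μ‖ < 1`.
-/

open Matrix Filter Topology

theorem Matrix.mulVec_add_eq_of_splitting {R n : Type*} [CommRing R] [Fintype n] [DecidableEq n]
    {M N : Matrix n n R} {b x : n → R} (hM : IsUnit M.det) (hx : (M - N) *ᵥ x = b) :
    (M⁻¹ * N) *ᵥ x + M⁻¹ *ᵥ b = x := by
  rw [← hx, ← mulVec_mulVec, ← mulVec_add, ← add_mulVec, add_sub_cancel, mulVec_mulVec,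
    nonsing_inv_mul M hM, one_mulVec]

section StationaryIteration

variable {R n : Type*} [Ring R] [Fintype n] [DecidableEq n] {T : Matrix n n R} {c xs : n → R}

theorem Matrix.stationary_iterate_eq_pow_mulVec_add (hfix : T *ᵥ xs + c = xs)
    {x : ℕ → n → R} (hx : ∀ k, x (k + 1) = T *ᵥ x k + c) (k : ℕ) :
    x k = (T ^ k) *ᵥ (x 0 - xs) + xs := by
  induction k with
  | zero => simp
  | succ k ih => rw [hx k, ih, mulVec_add, pow_succ', ← mulVec_mulVec, add_assoc, hfix]

theorem Matrix.tendsto_stationary_iterate_iff [TopologicalSpace R] [IsTopologicalAddGroup R]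
    (hfix : T *ᵥ xs + c = xs) :
    (∀ x : ℕ → n → R, (∀ k, x (k + 1) = T *ᵥ x k + c) → Tendsto x atTop (𝓝 xs)) ↔
      ∀ v, Tendsto (fun k : ℕ => (T ^ k) *ᵥ v) atTop (𝓝 0) := by
  constructor
  · intro h v
    have hx : ∀ k, (T ^ (k + 1)) *ᵥ v + xs = T *ᵥ ((T ^ k) *ᵥ v + xs) + c := fun k => by
      rw [mulVec_add, add_assoc, hfix, mulVec_mulVec, ← pow_succ']
    simpa using (h (fun k => (T ^ k) *ᵥ v + xs) hx).sub_const xs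
  · intro h x hx
    rw [funext (stationary_iterate_eq_pow_mulVec_add hfix hx)]
    simpa using (h (x 0 - xs)).add_const xs

end StationaryIteration

theorem tendsto_pow_atTop_nhds_zero_of_spectralRadius_lt_one {A : Type*} [NormedRing A]
    [NormedAlgebra ℂ A] [CompleteSpace A] {a : A} (ha : spectralRadius ℂ a < 1) :
    Tendsto (a ^ ·) atTop (𝓝 0) := by
  obtain ⟨r, har, hr1⟩ := ENNReal.lt_iff_exists_nnreal_btwn.1 ha
  have hbound : ∀ᶠ k : ℕ in atTop, ‖a ^ k‖ ≤ r ^ k := by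
    have hgelfand := spectrum.pow_nnnorm_pow_one_div_tendsto_nhds_spectralRadius a
    filter_upwards [hgelfand.eventually_lt_const har, eventually_ne_atTop 0] with k hk hk0
    rw [one_div, ENNReal.rpow_inv_lt_iff (by positivity), ENNReal.rpow_natCast] at hk
    exact_mod_cast hk.le
  exact squeeze_zero_norm' hbound
    (tendsto_pow_atTop_nhds_zero_of_lt_one r.coe_nonneg (by exact_mod_cast hr1))

theorem Matrix.exists_pow_mulVec_eq_of_mem_spectrum {K n : Type*} [Field K] [Fintype n]
    [DecidableEq n] {T : Matrix n n K} {μ : K} (hμ : μ ∈ spectrum K T) :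
    ∃ v ≠ 0, ∀ k : ℕ, (T ^ k) *ᵥ v = μ ^ k • v := by
  rw [← spectrum_toLin', ← Module.End.hasEigenvalue_iff_mem_spectrum] at hμ
  obtain ⟨v, hv⟩ := hμ.exists_hasEigenvector
  refine ⟨v, hv.2, fun k => ?_⟩
  rw [← toLin'_apply, toLin'_pow, hv.pow_apply]

theorem Matrix.norm_lt_one_of_mem_spectrum_of_tendsto_pow_mulVec {𝕜 n : Type*} [NormedField 𝕜]
    [Fintype n] [DecidableEq n] {T : Matrix n n 𝕜}
    (hT : ∀ v, Tendsto (fun k : ℕ => (T ^ k) *ᵥ v) atTop (𝓝 0)) {μ : 𝕜}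
    (hμ : μ ∈ spectrum 𝕜 T) : ‖μ‖ < 1 := by
  obtain ⟨v, hv0, hv⟩ := exists_pow_mulVec_eq_of_mem_spectrum hμ
  have hμv : Tendsto (fun k : ℕ => ‖μ ^ k • v‖ / ‖v‖) atTop (𝓝 0) := by
    simpa [hv] using ((hT v).norm.div_const ‖v‖)
  rw [← tendsto_pow_atTop_nhds_zero_iff_norm_lt_one, tendsto_zero_iff_norm_tendsto_zero]
  simpa [norm_smul, hv0] using hμv

theorem Matrix.forall_tendsto_pow_mulVec_iff_spectralRadius_lt_one {n : Type*} [Fintype n]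
    [DecidableEq n] {T : Matrix n n ℂ} :
    (∀ v, Tendsto (fun k : ℕ => (T ^ k) *ᵥ v) atTop (𝓝 0)) ↔ spectralRadius ℂ T < 1 := by
  -- any matrix norm would do: all of them induce the entrywise topology
  let _ := Matrix.linftyOpNormedRing (n := n) (α := ℂ)
  let _ := Matrix.linftyOpNormedAlgebra (n := n) (R := ℂ) (α := ℂ)
  constructor
  · intro hT
    rcases (spectrum ℂ T).eq_empty_or_nonempty with hempty | hne
    · simp [spectralRadius, hempty]
    · simpa using spectrum.spectralRadius_lt_of_forall_lt_of_nonempty hne (r := 1) fun μ hμ => by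
        exact_mod_cast norm_lt_one_of_mem_spectrum_of_tendsto_pow_mulVec hT hμ
  · intro hρ v
    have hcont : Continuous fun S : Matrix n n ℂ => S *ᵥ v :=
      continuous_id.matrix_mulVec continuous_const
    exact (hcont.tendsto' 0 0 (zero_mulVec v)).comp
      (tendsto_pow_atTop_nhds_zero_of_spectralRadius_lt_one hρ)

/-- Convergence of the stationary iteration `x⁽ᵏ⁺¹⁾ = T x⁽ᵏ⁾ + c` to `x* = A⁻¹ b`
for every initial guess is equivalent to `ρ(T) < 1`. -/
theorem stationary_iteration_tendsto_iff_spectralRadius_lt_one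
    (n : ℕ) (A M N : Matrix (Fin n) (Fin n) ℂ) (b : Fin n → ℂ)
    (hA : IsUnit A.det) (hM : IsUnit M.det) (hsplit : A = M - N)
    (T : Matrix (Fin n) (Fin n) ℂ) (hT : T = M⁻¹ * N)
    (c : Fin n → ℂ) (hc : c = M⁻¹.mulVec b) :
    (∀ x : ℕ → Fin n → ℂ,
        (∀ k, x (k + 1) = T.mulVec (x k) + c) →
        Tendsto x atTop (𝓝 (A⁻¹.mulVec b))) ↔
      spectralRadius ℂ T < 1 := by
  have hsol : (M - N) *ᵥ (A⁻¹ *ᵥ b) = b := by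
    rw [← hsplit, mulVec_mulVec, mul_nonsing_inv A hA, one_mulVec]
  have hfix : T *ᵥ (A⁻¹ *ᵥ b) + c = A⁻¹ *ᵥ b := hT ▸ hc ▸ mulVec_add_eq_of_splitting hM hsol
  rw [tendsto_stationary_iterate_iff hfix, forall_tendsto_pow_mulVec_iff_spectralRadius_lt_one]
end

section
/- Let A be an n×n complex matrix that is strictly diagonally dominant by rows, let b ∈ ℂⁿ, let D be the diagonal part of A, and let L and U be its strictly lower and upper triangular parts. Then for every initial guess u⁽⁰⁾ ∈ ℂⁿ, the Jacobi iterates u⁽ᵏ⁺¹⁾ = D⁻¹(b − (L+U)u⁽ᵏ⁾) converge to the unique solution u* of A u = b. -/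
/-!
With `D` the diagonal of `A`, the Jacobi step is `x ↦ D⁻¹ b - D⁻¹ (A - D) x`, an affine map whose
linear part `D⁻¹ (A - D)` has `i`-th absolute row sum `∑_{j ≠ i} ‖A i j‖ / ‖A i i‖ < 1`.
So its `ℓ∞` operator norm is `< 1` and the step is a contraction of `(𝕜ⁿ, ‖·‖∞)`, whose fixed
points are exactly the solutions of `A x = b`. Banach's fixed point theorem gives both the unique
solution and the convergence of the iterates from any starting vector.
-/

open Matrix Filter Topology
open scoped NNReal

attribute [local instance] Matrix.linftyOpSeminormedAddCommGroup

namespace Matrix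

variable {n 𝕜 : Type*} [DecidableEq n]

theorem strictLower_add_strictUpper_eq_sub_diagonal {α : Type*} [LinearOrder n] [AddGroup α]
    (A : Matrix n n α) :
    (of fun i j => if j < i then A i j else 0) + (of fun i j => if i < j then A i j else 0) =
      A - diagonal A.diag := by
  ext i j
  rcases lt_trichotomy j i with h | rfl | h
  · simp [h, h.not_gt, diagonal_apply_ne _ h.ne']
  · simp
  · simp [h, h.not_gt, diagonal_apply_ne _ h.ne]

variable [Fintype n]

theorem inv_diagonal_of_ne_zero [Field 𝕜] {d : n → 𝕜} (hd : ∀ i, d i ≠ 0) :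
    (diagonal d)⁻¹ = diagonal fun i => (d i)⁻¹ :=
  inv_eq_left_inv <| by simp [diagonal_mul_diagonal, hd]

section Jacobi

variable [CommRing 𝕜]

noncomputable def jacobiMatrix (A : Matrix n n 𝕜) : Matrix n n 𝕜 :=
  (diagonal A.diag)⁻¹ * (A - diagonal A.diag)

noncomputable def jacobiStep (A : Matrix n n 𝕜) (b x : n → 𝕜) : n → 𝕜 :=
  (diagonal A.diag)⁻¹ *ᵥ (b - (A - diagonal A.diag) *ᵥ x)

theorem jacobiStep_sub_jacobiStep (A : Matrix n n 𝕜) (b x y : n → 𝕜) :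
    jacobiStep A b x - jacobiStep A b y = jacobiMatrix A *ᵥ (y - x) := by
  simp only [jacobiStep, jacobiMatrix, ← mulVec_mulVec, ← mulVec_sub]
  congr 1
  rw [mulVec_sub]
  abel

theorem isFixedPt_jacobiStep_iff {A : Matrix n n 𝕜} (hA : IsUnit (diagonal A.diag).det)
    (b x : n → 𝕜) : Function.IsFixedPt (jacobiStep A b) x ↔ A *ᵥ x = b := by
  set D := diagonal A.diag
  have hDx : D *ᵥ x = b - (A - D) *ᵥ x ↔ A *ᵥ x = b := by
    rw [eq_sub_iff_add_eq, ← add_mulVec, add_sub_cancel]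
  rw [← hDx, Function.IsFixedPt, jacobiStep, eq_comm]
  constructor
  · intro h
    nth_rewrite 1 [h]
    rw [mulVec_mulVec, mul_nonsing_inv _ hA, one_mulVec]
  · intro h
    rw [← h, mulVec_mulVec, nonsing_inv_mul _ hA, one_mulVec]

end Jacobi

section Dominant

variable [NormedField 𝕜] {A : Matrix n n 𝕜}

theorem ne_zero_of_sum_norm_lt {i : n} (h : ∑ j ∈ Finset.univ.erase i, ‖A i j‖ < ‖A i i‖) :
    A i i ≠ 0 :=
  norm_pos_iff.mp <| (Finset.sum_nonneg fun _ _ => norm_nonneg _).trans_lt h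

theorem sum_norm_sub_diagonal_apply (A : Matrix n n 𝕜) (i : n) :
    ∑ j, ‖(A - diagonal A.diag) i j‖ = ∑ j ∈ Finset.univ.erase i, ‖A i j‖ := by
  rw [← Finset.sum_erase Finset.univ (a := i) (by simp)]
  refine Finset.sum_congr rfl fun j hj => ?_
  rw [sub_apply, diagonal_apply_ne _ (Finset.ne_of_mem_erase hj).symm, sub_zero]

theorem jacobiMatrix_apply (hA : ∀ i, A i i ≠ 0) (i j : n) :
    jacobiMatrix A i j = (A i i)⁻¹ * (A - diagonal A.diag) i j := by
  rw [jacobiMatrix, inv_diagonal_of_ne_zero (d := A.diag) hA, diagonal_mul]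
  rfl

theorem linfty_opNNNorm_jacobiMatrix_lt_one
    (hdom : ∀ i, ∑ j ∈ Finset.univ.erase i, ‖A i j‖ < ‖A i i‖) : ‖jacobiMatrix A‖₊ < 1 := by
  rw [linfty_opNNNorm_def, Finset.sup_lt_iff (bot_eq_zero (α := ℝ≥0) ▸ one_pos)]
  intro i _
  have hA i : A i i ≠ 0 := ne_zero_of_sum_norm_lt (hdom i)
  rw [← NNReal.coe_lt_coe, NNReal.coe_sum, NNReal.coe_one]
  calc ∑ j, ‖jacobiMatrix A i j‖
      = ∑ j, ‖A i i‖⁻¹ * ‖(A - diagonal A.diag) i j‖ := by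
        simp only [jacobiMatrix_apply hA, norm_mul, norm_inv]
    _ = ‖A i i‖⁻¹ * ∑ j ∈ Finset.univ.erase i, ‖A i j‖ := by
        rw [← Finset.mul_sum, sum_norm_sub_diagonal_apply]
    _ < 1 := (inv_mul_lt_one₀ (norm_pos_iff.mpr (hA i))).mpr (hdom i)

theorem contractingWith_jacobiStep
    (hdom : ∀ i, ∑ j ∈ Finset.univ.erase i, ‖A i j‖ < ‖A i i‖) (b : n → 𝕜) :
    ContractingWith ‖jacobiMatrix A‖₊ (jacobiStep A b) := by
  refine ⟨linfty_opNNNorm_jacobiMatrix_lt_one hdom, LipschitzWith.of_dist_le_mul fun x y => ?_⟩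
  rw [dist_eq_norm, dist_comm, dist_eq_norm, jacobiStep_sub_jacobiStep]
  exact linfty_opNorm_mulVec _ _

theorem existsUnique_mulVec_eq_and_jacobi_tendsto [CompleteSpace 𝕜]
    (hdom : ∀ i, ∑ j ∈ Finset.univ.erase i, ‖A i j‖ < ‖A i i‖) (b : n → 𝕜) {u : ℕ → n → 𝕜}
    (hu : ∀ k, u (k + 1) = jacobiStep A b (u k)) :
    (∃! x, A *ᵥ x = b) ∧ ∀ x, A *ᵥ x = b → Tendsto u atTop (𝓝 x) := by
  have hf := contractingWith_jacobiStep hdom b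
  have hD : IsUnit (diagonal A.diag).det := by
    simpa [isUnit_iff_ne_zero, Finset.prod_ne_zero_iff] using
      fun i => ne_zero_of_sum_norm_lt (hdom i)
  have hfix x : Function.IsFixedPt (jacobiStep A b) x ↔ A *ᵥ x = b :=
    isFixedPt_jacobiStep_iff hD b x
  have hiter k : (jacobiStep A b)^[k] (u 0) = u k := by
    induction k with
    | zero => rfl
    | succ k ih => rw [Function.iterate_succ_apply', ih, hu]
  refine ⟨⟨_, (hfix _).1 hf.fixedPoint_isFixedPt,
    fun x hx => hf.fixedPoint_unique ((hfix x).2 hx)⟩, fun x hx => ?_⟩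
  rw [hf.fixedPoint_unique ((hfix x).2 hx)]
  exact (hf.tendsto_iterate_fixedPoint (u 0)).congr hiter

end Dominant

end Matrix

/-- For a strictly row-diagonally dominant complex matrix `A`, the system `A u = b`
has a unique solution `u*`, and for every initial guess the Jacobi iterates
`u⁽ᵏ⁺¹⁾ = D⁻¹(b − (L+U)u⁽ᵏ⁾)` converge to `u*`. -/
theorem jacobi_iterates_tendsto_solution_of_diagonally_dominant
    (n : ℕ) (A : Matrix (Fin n) (Fin n) ℂ) (b : Fin n → ℂ)
    (hdom : ∀ i, ∑ j ∈ Finset.univ.erase i, ‖A i j‖ < ‖A i i‖)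
    (D L U : Matrix (Fin n) (Fin n) ℂ)
    (hD : D = Matrix.diagonal fun i => A i i)
    (hL : L = Matrix.of fun i j => if j < i then A i j else 0)
    (hU : U = Matrix.of fun i j => if i < j then A i j else 0)
    (u : ℕ → Fin n → ℂ)
    (hu : ∀ k, u (k + 1) = D⁻¹.mulVec (b - (L + U).mulVec (u k))) :
    (∃! ustar : Fin n → ℂ, A.mulVec ustar = b) ∧
      ∀ ustar : Fin n → ℂ, A.mulVec ustar = b → Tendsto u atTop (𝓝 ustar) := by
  subst hD hL hU
  rw [strictLower_add_strictUpper_eq_sub_diagonal] at hu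
  exact existsUnique_mulVec_eq_and_jacobi_tendsto hdom b hu
end

section
/- Let A be an invertible n×n complex matrix, let A = M − N be a splitting of A with M invertible, set T = M⁻¹N and c = M⁻¹b, let x* = A⁻¹b, and let x⁽ᵏ⁾ be defined by x⁽ᵏ⁺¹⁾ = T x⁽ᵏ⁾ + c from an initial guess x⁽⁰⁾. Then limsup_{k→∞} ‖x⁽ᵏ⁾ − x*‖^{1/k} ≤ ρ(T), where ρ(T) is the spectral radius of T; i.e., the asymptotic linear convergence factor of the iteration is at most ρ(T). -/
/-!
The error `eₖ = x⁽ᵏ⁾ - x*` satisfies `eₖ = Tᵏ e₀`, because `x*` is a fixed point of the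
iteration. Hence `‖eₖ‖ ≤ ‖Tᵏ‖ ‖e₀‖` for the operator norm induced by the sup norm, and the
`k`-th roots of the right-hand side converge to `ρ(T) · 1` by Gelfand's formula.
-/

open Matrix Filter Topology
open scoped NNReal ENNReal

theorem ENNReal.tendsto_rpow_one_div_natCast_nhds_one {C : ℝ≥0∞} (h0 : C ≠ 0) (htop : C ≠ ∞) :
    Tendsto (fun k : ℕ => C ^ (1 / (k : ℝ))) atTop (𝓝 1) := by
  lift C to ℝ≥0 using htop
  have h0' : C ≠ 0 := by exact_mod_cast h0
  have hC : Tendsto (fun k : ℕ => C ^ (1 / (k : ℝ))) atTop (𝓝 1) := by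
    simpa [Function.comp_def] using
      (NNReal.continuousAt_rpow (x := C) (y := 0) (Or.inl h0')).tendsto.comp
        (tendsto_const_nhds.prodMk_nhds tendsto_one_div_atTop_nhds_zero_nat)
  simpa [ENNReal.coe_rpow_of_ne_zero h0'] using ENNReal.tendsto_coe.mpr hC

theorem spectrum.limsup_rpow_one_div_le_spectralRadius_of_le_mul {A : Type*} [NormedRing A]
    [NormedAlgebra ℂ A] [CompleteSpace A] (a : A) {u : ℕ → ℝ≥0} {C : ℝ≥0}
    (hu : ∀ k, u k ≤ ‖a ^ k‖₊ * C) :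
    limsup (fun k : ℕ => (u k : ℝ≥0∞) ^ (1 / (k : ℝ))) atTop ≤ spectralRadius ℂ a := by
  -- `C + 1` rather than `C`, so that its `k`-th roots tend to `1` even when `C = 0`
  have hu' (k : ℕ) : (u k : ℝ≥0∞) ^ (1 / (k : ℝ)) ≤
      (‖a ^ k‖₊ : ℝ≥0∞) ^ (1 / (k : ℝ)) * ((C + 1 : ℝ≥0) : ℝ≥0∞) ^ (1 / (k : ℝ)) := by
    rw [← ENNReal.mul_rpow_of_nonneg _ _ (by positivity), ← ENNReal.coe_mul]
    gcongr
    exact (hu k).trans (by gcongr; exact le_self_add)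
  have hlim := ENNReal.Tendsto.mul (pow_nnnorm_pow_one_div_tendsto_nhds_spectralRadius a)
    (Or.inr ENNReal.one_ne_top) (ENNReal.tendsto_rpow_one_div_natCast_nhds_one
      (C := ((C + 1 : ℝ≥0) : ℝ≥0∞)) (by simp) (by simp)) (Or.inl one_ne_zero)
  calc limsup (fun k : ℕ => (u k : ℝ≥0∞) ^ (1 / (k : ℝ))) atTop
      ≤ spectralRadius ℂ a * 1 := (limsup_le_limsup (.of_forall hu')).trans_eq hlim.limsup_eq
    _ = spectralRadius ℂ a := mul_one _

theorem Matrix.limsup_nnnorm_pow_mulVec_rpow_le_spectralRadius {ι : Type*} [Fintype ι]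
    [DecidableEq ι] (T : Matrix ι ι ℂ) (v : ι → ℂ) :
    limsup (fun k : ℕ => (‖(T ^ k) *ᵥ v‖₊ : ℝ≥0∞) ^ (1 / (k : ℝ))) atTop ≤
      spectralRadius ℂ T := by
  let _ := Matrix.linftyOpNormedRing (n := ι) (α := ℂ)
  let _ := Matrix.linftyOpNormedAlgebra (n := ι) (R := ℂ) (α := ℂ)
  exact spectrum.limsup_rpow_one_div_le_spectralRadius_of_le_mul T
    fun k => linfty_opNNNorm_mulVec (T ^ k) v

theorem Matrix.sub_eq_pow_mulVec_of_iterate {ι α : Type*} [Fintype ι] [DecidableEq ι] [Ring α]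
    {T : Matrix ι ι α} {c xstar : ι → α} {x : ℕ → ι → α} (hfix : T *ᵥ xstar + c = xstar)
    (hx : ∀ k, x (k + 1) = T *ᵥ x k + c) (k : ℕ) :
    x k - xstar = (T ^ k) *ᵥ (x 0 - xstar) := by
  induction k with
  | zero => simp
  | succ k ih =>
    rw [hx, pow_succ', ← mulVec_mulVec, ← ih, mulVec_sub, eq_sub_of_add_eq' hfix]
    abel

theorem Matrix.splitting_mulVec_add_eq {ι α : Type*} [Fintype ι] [DecidableEq ι] [CommRing α]
    {M N : Matrix ι ι α} {b xstar : ι → α} (hM : IsUnit M.det) (hsol : (M - N) *ᵥ xstar = b) :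
    (M⁻¹ * N) *ᵥ xstar + M⁻¹ *ᵥ b = xstar := by
  rw [← hsol, sub_mulVec, mulVec_sub, ← mulVec_mulVec, mulVec_mulVec _ M⁻¹ M,
    nonsing_inv_mul M hM, one_mulVec, add_sub_cancel]

/-- Asymptotic convergence factor of a stationary iterative method:
`limsup_{k→∞} ‖x⁽ᵏ⁾ − x*‖^{1/k} ≤ ρ(T)`. -/
theorem stationary_iteration_limsup_rpow_le_spectralRadius
    (n : ℕ) (A M N : Matrix (Fin n) (Fin n) ℂ) (b : Fin n → ℂ)
    (hA : IsUnit A.det) (hM : IsUnit M.det) (hsplit : A = M - N)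
    (T : Matrix (Fin n) (Fin n) ℂ) (hT : T = M⁻¹ * N)
    (c : Fin n → ℂ) (hc : c = M⁻¹.mulVec b)
    (xstar : Fin n → ℂ) (hxstar : xstar = A⁻¹.mulVec b)
    (x : ℕ → Fin n → ℂ) (hx : ∀ k, x (k + 1) = T.mulVec (x k) + c) :
    Filter.limsup
        (fun k : ℕ => (‖x k - xstar‖₊ : ENNReal) ^ (1 / (k : ℝ))) atTop ≤
      spectralRadius ℂ T := by
  have hsol : (M - N) *ᵥ xstar = b := by
    rw [← hsplit, hxstar, mulVec_mulVec, mul_nonsing_inv A hA, one_mulVec]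
  have hfix : T *ᵥ xstar + c = xstar := hT ▸ hc ▸ splitting_mulVec_add_eq hM hsol
  convert limsup_nnnorm_pow_mulVec_rpow_le_spectralRadius T (x 0 - xstar) using 6 with k
  exact sub_eq_pow_mulVec_of_iterate hfix hx k
end
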